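/- Let R be an associative unital ℚ-algebra, let t, z be central elements of R, let p, q, θ ∈ R, and let u ∈ R be invertible with pu = up and qu = uq. Define the Painlevé II_JM Lax matrices A = (z² + p + t/2)•H + (u(z − q))•X + (−2u⁻¹(pz + θ + pq))•Y and B = (z/2)•H + (u/2)•X + (−pu⁻¹)•Y in Mat₂(R). Then the trace of the commutator satisfies trace(AB − BA) = −(pq − qp) − u⁻¹(θu − uθ). In particular, if pq − qp = κ for a central element κ, then trace(AB − BA) = 0 if and only if θu − uθ = −κ·u. -/
import Mathlib


/-- The standard sl₂ basis matrix `H`. -/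
def matH (R : Type*) [Ring R] : Matrix (Fin 2) (Fin 2) R := !![1, 0; 0, -1]
/-- The standard sl₂ basis matrix `X`. -/
def matX (R : Type*) [Ring R] : Matrix (Fin 2) (Fin 2) R := !![0, 1; 0, 0]
/-- The standard sl₂ basis matrix `Y`. -/
def matY (R : Type*) [Ring R] : Matrix (Fin 2) (Fin 2) R := !![0, 0; 1, 0]

/-- Identity (trace) component of the quantized Painlevé II_JM commutator:
for the Lax pair `A = (z² + p + t/2)•H + (u(z − q))•X + (−2u⁻¹(pz + θ + pq))•Y`,
`B = (z/2)•H + (u/2)•X + (−pu⁻¹)•Y` (with `t, z` central and `u` an invertible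
element commuting with `p` and `q`) one has
`trace(AB − BA) = −(pq − qp) − u⁻¹(θu − uθ)`; in particular if `pq − qp = κ` is
central then the trace vanishes iff `θu − uθ = −κu`. -/
theorem painleveII_trace_commutator
    (R : Type*) [Ring R] [Algebra ℚ R]
    (t z p q θ : R) (u : Rˣ)
    (ht : ∀ x : R, Commute t x) (hz : ∀ x : R, Commute z x)
    (hup : (u : R) * p = p * (u : R)) (huq : (u : R) * q = q * (u : R)) :
    let A : Matrix (Fin 2) (Fin 2) R :=
      (z * z + p + ((1 : ℚ)/2) • t) • matH R
        + ((u : R) * (z - q)) • matX R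
        + (-((2 : R) * ((↑u⁻¹ : R) * (p * z + θ + p * q)))) • matY R
    let B : Matrix (Fin 2) (Fin 2) R :=
      (((1 : ℚ)/2) • z) • matH R + (((1 : ℚ)/2) • (u : R)) • matX R
        + (-(p * (↑u⁻¹ : R))) • matY R
    Matrix.trace (A * B - B * A)
        = -(p * q - q * p) - (↑u⁻¹ : R) * (θ * (u : R) - (u : R) * θ) ∧
    ∀ κ : R, (∀ x : R, Commute κ x) → p * q - q * p = κ →
      (Matrix.trace (A * B - B * A) = 0 ↔ θ * (u : R) - (u : R) * θ = -(κ * (u : R))) := by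
  intro A B
  have key : Matrix.trace (A * B - B * A)
      = -(p * q - q * p) - (↑u⁻¹ : R) * (θ * (u : R) - (u : R) * θ) := by
    have h2 : ∀ x : R, (2⁻¹ : ℚ) • ((2 : R) * x) = x := fun x => by
      rw [two_mul, ← two_smul ℚ x, smul_smul]; norm_num
    have hu2 : ∀ x : R, (↑u : R) * ((2 : R) * x) = 2 * ((↑u : R) * x) := fun x => by
      rw [← mul_assoc, ← mul_assoc, (Commute.ofNat_right (↑u : R) 2).eq]
    have hwp : (↑u⁻¹ : R) * p = p * (↑u⁻¹ : R) :=
      (Commute.units_inv_left hup).eq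
    have hwq : (↑u⁻¹ : R) * q = q * (↑u⁻¹ : R) :=
      (Commute.units_inv_left huq).eq
    have hwp' : ∀ x : R, (↑u⁻¹ : R) * (p * x) = p * ((↑u⁻¹ : R) * x) := fun x => by
      rw [← mul_assoc, hwp, mul_assoc]
    have hup' : ∀ x : R, (↑u : R) * (p * x) = p * ((↑u : R) * x) := fun x => by
      rw [← mul_assoc, hup, mul_assoc]
    have huq' : ∀ x : R, (↑u : R) * (q * x) = q * ((↑u : R) * x) := fun x => by
      rw [← mul_assoc, huq, mul_assoc]
    have hwq' : ∀ x : R, (↑u⁻¹ : R) * (q * x) = q * ((↑u⁻¹ : R) * x) := fun x => by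
      rw [← mul_assoc, hwq, mul_assoc]
    have hz' : ∀ x : R, z * x = x * z := fun x => (hz x).eq
    have ht' : ∀ x : R, t * x = x * t := fun x => (ht x).eq
    simp [A, B, matH, matX, matY, Matrix.trace_fin_two, Matrix.mul_apply,
      Fin.sum_univ_two, mul_add, add_mul, mul_sub, sub_mul, hu2, h2, smul_smul,
      mul_assoc, hwp', hup', huq', hwq', Units.inv_mul_cancel_left, Units.mul_inv_cancel_left,
      Units.inv_mul, Units.mul_inv, hz' p, hz' t]
    have e1 : (↑u : R) * (z * (p * ↑u⁻¹)) = p * z := by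
      rw [← mul_assoc, ← hz' (↑u : R), mul_assoc, hup' _]
      simp [Units.mul_inv, hz' p]
    have e2 : p * ((↑u⁻¹ : R) * (z * ↑u)) = p * z := by
      rw [← mul_assoc (↑u⁻¹ : R), ← hz' (↑u⁻¹ : R), mul_assoc]
      simp [Units.inv_mul]
    rw [e1, e2]
    abel
  refine ⟨key, fun κ hκ hk => ?_⟩
  rw [key, hk]
  constructor
  · intro h
    have hX : (↑u⁻¹ : R) * (θ * (u : R) - (u : R) * θ) = -κ :=
      (sub_eq_zero.mp h).symm
    have h2 := congrArg (fun x => (↑u : R) * x) hX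
    simp only [Units.mul_inv_cancel_left, mul_neg] at h2
    rw [h2, (hκ (↑u : R)).eq]
  · intro h
    rw [h]
    simp only [mul_neg, ← mul_assoc, ← (hκ (↑u⁻¹ : R)).eq]
    rw [mul_assoc, Units.inv_mul]
    simp
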